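/- For a composition α of n with length ℓ, the Dyck path p_{n,α} = N^{α₁}E^{α₁}⋯N^{α_ℓ}E^{α_ℓ} has area equal to ∑_{i=1}^{ℓ} C(α_i, 2) and bounce equal to ∑_{i=1}^{ℓ} (i−1)·α_i. -/

import Mathlib

/-- A Dyck path of semilength `n`, encoded as a list of steps
(`true` = north, `false` = east), staying weakly above the diagonal. -/
def IsDyck (n : ℕ) (w : List Bool) : Prop :=
  w.length = 2 * n ∧ w.count true = n ∧
    ∀ k, (w.take k).count false ≤ (w.take k).count true

/-- The area of a Dyck path: the number of whole unit cells between the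
path and the diagonal (on each north step, the current number of east
steps is subtracted from the current number of north steps). -/
def area (w : List Bool) : ℕ :=
  (w.foldl
    (fun (p : ℕ × ℕ × ℕ) s =>
      if s then (p.1 + (p.2.1 - p.2.2), p.2.1 + 1, p.2.2)
      else (p.1, p.2.1, p.2.2 + 1)) (0, 0, 0)).1

/-- `hgt w b` is the number of north steps of `w` preceding its `(b+1)`-st
east step, i.e. the height at which the bounce path heading north along
the line `x = b` meets an east step of `w`. -/
def hgt : List Bool → ℕ → ℕ
  | [], _ => 0
  | true :: w, b => hgt w b + 1
  | false :: _, 0 => 0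
  | false :: w, b + 1 => hgt w b

/-- The `i`-th bounce point (a height on the diagonal) of a Dyck path. -/
def bpt (w : List Bool) (i : ℕ) : ℕ := (hgt w)^[i] 0

/-- The bounce statistic of a Dyck path of semilength `n`:
`∑ (n - b_i)` over the successive bounce points `b_i`, `i ≥ 1`
(once the bounce path reaches `n` the terms vanish). -/
def bounce (n : ℕ) (w : List Bool) : ℕ :=
  ∑ i ∈ Finset.range n, (n - bpt w (i + 1))

/-- The Dyck path `N^{α₁}E^{α₁} ⋯ N^{α_ℓ}E^{α_ℓ}` of a composition `α`. -/
def pComp (α : List ℕ) : List Bool :=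
  α.foldr (fun a acc => List.replicate a true ++ List.replicate a false ++ acc) []

private abbrev astep : ℕ × ℕ × ℕ → Bool → ℕ × ℕ × ℕ :=
  fun (p : ℕ × ℕ × ℕ) s =>
      if s then (p.1 + (p.2.1 - p.2.2), p.2.1 + 1, p.2.2)
      else (p.1, p.2.1, p.2.2 + 1)

lemma pComp_cons (a : ℕ) (α : List ℕ) :
    pComp (a :: α) = List.replicate a true ++ (List.replicate a false ++ pComp α) := by
  simp [pComp]

lemma foldl_true (a : ℕ) : ∀ (k A m : ℕ) (w : List Bool),
    List.foldl astep (A, m + k, m) (List.replicate a true ++ w) =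
      List.foldl astep (A + a * k + a.choose 2, m + k + a, m) w := by
  induction a with
  | zero => simp
  | succ a ih =>
    intro k A m w
    have h1 : List.replicate (a+1) true = true :: List.replicate a true := rfl
    rw [h1]
    have h2 : astep (A, m + k, m) true = (A + k, m + (k+1), m) := by
      simp [astep]
      omega
    simp only [List.cons_append, List.foldl_cons, h2, ih (k+1) (A+k) m w]
    have hc : (a+1).choose 2 = a.choose 2 + a := by
      rw [Nat.choose_two_right, Nat.choose_two_right]
      have h : (a+1) * (a + 1 - 1) = a * (a - 1) + 2 * a := by
        cases a with
        | zero => rfl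
        | succ b => simp only [Nat.add_sub_cancel, Nat.succ_sub_one]; ring
      omega
    have hm1 : A + (a+1) * k + (a+1).choose 2 = A + k + a * (k+1) + a.choose 2 := by
      rw [hc, Nat.succ_mul, Nat.mul_add, Nat.mul_one]
      omega
    rw [hm1, show m + k + (a+1) = m + (k+1) + a from by omega]

lemma foldl_false (a : ℕ) : ∀ (A c m : ℕ) (w : List Bool),
    List.foldl astep (A, c, m) (List.replicate a false ++ w) =
      List.foldl astep (A, c, m + a) w := by
  induction a with
  | zero => simp
  | succ a ih =>
    intro A c m w
    have h1 : List.replicate (a+1) false = false :: List.replicate a false := rfl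
    rw [h1]
    have h2 : astep (A, c, m) false = (A, c, m + 1) := by simp [astep]
    simp only [List.cons_append, List.foldl_cons, h2, ih A c (m+1) w]
    rw [show m + (a+1) = m + 1 + a from by omega]

lemma sum_range_id_choose (a : ℕ) : ∑ j ∈ Finset.range a, j = a.choose 2 := by
  have h := Finset.sum_range_id_mul_two a
  have h2 := Nat.choose_two_right a
  omega

lemma areaAux (α : List ℕ) : ∀ (A m : ℕ),
    (List.foldl astep (A, m, m) (pComp α)).1 = A + (α.map (fun a => a.choose 2)).sum := by
  induction α with
  | nil => intro A m; simp [pComp]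
  | cons a β ih =>
    intro A m
    rw [pComp_cons]
    have h := foldl_true a 0 A m (List.replicate a false ++ pComp β)
    simp only [Nat.add_zero, Nat.zero_add, Nat.mul_zero] at h
    rw [h, foldl_false, ih]
    simp
    omega

lemma hgt_true (a : ℕ) : ∀ (w : List Bool) (b : ℕ),
    hgt (List.replicate a true ++ w) b = hgt w b + a := by
  induction a with
  | zero => simp
  | succ a ih =>
    intro w b
    have h1 : List.replicate (a+1) true = true :: List.replicate a true := rfl
    rw [h1, List.cons_append]
    show hgt (List.replicate a true ++ w) b + 1 = hgt w b + (a + 1)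
    rw [ih]; omega

lemma hgt_false_ge (a : ℕ) : ∀ (w : List Bool) (b : ℕ),
    hgt (List.replicate a false ++ w) (a + b) = hgt w b := by
  induction a with
  | zero => simp
  | succ a ih =>
    intro w b
    have h1 : List.replicate (a+1) false = false :: List.replicate a false := rfl
    rw [h1, List.cons_append]
    have : a + 1 + b = (a + b) + 1 := by omega
    rw [this]
    show hgt (List.replicate a false ++ w) (a + b) = hgt w b
    exact ih w b

lemma hgt_false_zero (a : ℕ) (ha : 0 < a) (w : List Bool) :
    hgt (List.replicate a false ++ w) 0 = 0 := by
  obtain ⟨a', rfl⟩ : ∃ a', a = a' + 1 := ⟨a - 1, by omega⟩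
  rfl

lemma hgtKey : ∀ (α : List ℕ), (∀ x ∈ α, 0 < x) → ∀ i,
    hgt (pComp α) ((α.take i).sum) = ((α.take (i+1)).sum) := by
  intro α
  induction α with
  | nil => intro _ i; simp [pComp, hgt]
  | cons a β ih =>
    intro hpos i
    rw [pComp_cons]
    cases i with
    | zero =>
      simp only [List.take_zero, List.sum_nil, List.take_succ_cons, List.take_zero,
        List.sum_cons, List.sum_nil]
      rw [hgt_true, hgt_false_zero a (hpos a (by simp)) _]
      omega
    | succ i =>
      simp only [List.take_succ_cons, List.sum_cons]
      rw [hgt_true]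
      have : a + (β.take i).sum = a + (β.take i).sum := rfl
      rw [show a + (List.take i β).sum = a + (List.take i β).sum from rfl]
      rw [hgt_false_ge a _ ((β.take i).sum)]
      rw [ih (fun x hx => hpos x (by simp [hx])) i]
      omega

lemma bptEq (α : List ℕ) (hpos : ∀ x ∈ α, 0 < x) : ∀ i,
    bpt (pComp α) i = (α.take i).sum := by
  intro i
  induction i with
  | zero => simp [bpt]
  | succ i ih =>
    unfold bpt
    rw [Function.iterate_succ_apply']
    show hgt (pComp α) (bpt (pComp α) i) = _
    rw [ih, hgtKey α hpos i]

lemma sumGetD (β : List ℕ) : ∑ i ∈ Finset.range β.length, β.getD i 0 = β.sum := by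
  induction β with
  | nil => simp
  | cons a β ih =>
    rw [List.length_cons, Finset.sum_range_succ']
    simp only [List.getD_cons_succ, List.getD_cons_zero, List.sum_cons, ih]
    omega

lemma length_le_sum (β : List ℕ) (hpos : ∀ x ∈ β, 0 < x) : β.length ≤ β.sum := by
  induction β with
  | nil => simp
  | cons a β ih =>
    simp only [List.length_cons, List.sum_cons]
    have := ih (fun x hx => hpos x (by simp [hx]))
    have := hpos a (by simp)
    omega

lemma sumLemma : ∀ (α : List ℕ), (∀ x ∈ α, 0 < x) → ∀ N, α.length ≤ N →
    ∑ i ∈ Finset.range N, (α.sum - (α.take (i+1)).sum) =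
      ∑ i ∈ Finset.range α.length, i * α.getD i 0 := by
  intro α
  induction α with
  | nil => intro _ N _; simp
  | cons a β ih =>
    intro hpos N hN
    have hpos' : ∀ x ∈ β, 0 < x := fun x hx => hpos x (by simp [hx])
    obtain ⟨M, rfl⟩ : ∃ M, N = M + 1 := ⟨N - 1, by simp at hN; omega⟩
    have hM : β.length ≤ M := by simp at hN; omega
    rw [Finset.sum_range_succ']
    simp only [List.take_succ_cons, List.sum_cons, List.take_zero, List.sum_nil, Nat.add_zero]
    have hterm : ∀ i, a + β.sum - (a + (β.take (i+1)).sum) = β.sum - (β.take (i+1)).sum := by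
      intro i; omega
    have hsplit : ∑ i ∈ Finset.range M, (a + β.sum - (a + (β.take (i+1+1-1)).sum)) =
        ∑ i ∈ Finset.range M, (β.sum - (β.take (i+1)).sum) := by
      apply Finset.sum_congr rfl; intro i _; exact hterm i
    calc ∑ i ∈ Finset.range M, (a + β.sum - (a + (β.take (i+1)).sum)) + (a + β.sum - a)
        = ∑ i ∈ Finset.range M, (β.sum - (β.take (i+1)).sum) + β.sum := by
          rw [Finset.sum_congr rfl (fun i _ => hterm i)]; omega
      _ = ∑ i ∈ Finset.range β.length, i * β.getD i 0 + β.sum := by rw [ih hpos' M hM]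
      _ = ∑ i ∈ Finset.range (a :: β).length, i * (a :: β).getD i 0 := by
          rw [List.length_cons, Finset.sum_range_succ']
          simp only [List.getD_cons_succ, List.getD_cons_zero, Nat.zero_mul, Nat.add_zero]
          rw [← sumGetD β]
          rw [← Finset.sum_add_distrib]
          rw [Finset.sum_congr rfl (fun i _ => (by ring : i * β.getD i 0 + β.getD i 0 = (i+1) * β.getD i 0))]

theorem stmt0 (n : ℕ) (α : List ℕ) (hpos : ∀ x ∈ α, 0 < x) (hsum : α.sum = n) :
    area (pComp α) = (α.map (fun a => a.choose 2)).sum ∧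
    bounce n (pComp α) = ∑ i ∈ Finset.range α.length, i * α.getD i 0 := by
  constructor
  · have := areaAux α 0 0
    simpa [area, astep] using this
  · unfold bounce
    have hb : ∀ i, bpt (pComp α) (i+1) = (α.take (i+1)).sum := fun i => bptEq α hpos (i+1)
    have h1 : ∑ i ∈ Finset.range n, (n - bpt (pComp α) (i+1)) =
        ∑ i ∈ Finset.range n, (α.sum - (α.take (i+1)).sum) := by
      apply Finset.sum_congr rfl
      intro i _
      rw [hb i, hsum]
    rw [h1, sumLemma α hpos n (hsum ▸ length_le_sum α hpos)]
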